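/- Let M be an inverse monoid with identity 1, let β, γ : M → M be premorphisms, and let m, n ∈ M with n*n⁻¹ = β(1). Then γ(β(m)*n) = γ(β(m))*γ(n). (This identity establishes the associativity of the holomorph multiplication (α,m) ⋄ (β,n) = (α∘β, β(m)*n) on pairs of premorphisms and elements of M.) -/

import Mathlib

/-- An inverse monoid: a monoid in which every element `a` has a
(unique) inverse `a⁻¹` with `a * a⁻¹ * a = a` and `a⁻¹ * a * a⁻¹ = a⁻¹`. -/
class InverseMonoid (M : Type*) extends Monoid M, Inv M where
  mul_inv_mul : ∀ a : M, a * a⁻¹ * a = a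
  inv_mul_inv : ∀ a : M, a⁻¹ * a * a⁻¹ = a⁻¹
  inv_unique : ∀ a b : M, a * b * a = a → b * a * b = b → b = a⁻¹

/-- The natural partial order on an inverse monoid:
`a ≤ b` iff `a = e * b` for some idempotent `e`. -/
def npo {M : Type*} [InverseMonoid M] (a b : M) : Prop :=
  ∃ e : M, e * e = e ∧ a = e * b

/-- A premorphism: `θ (a * b) ≤ θ a * θ b` in the natural partial order. -/
def IsPremorphism {M : Type*} [InverseMonoid M] (θ : M → M) : Prop :=
  ∀ a b : M, npo (θ (a * b)) (θ a * θ b)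

/-!
A premorphism satisfies `θ a ≤ θ a * θ a⁻¹ * θ a`, and `x ≤ y` forces `x = y * x⁻¹ * x`; so
`θ a * θ a⁻¹ * θ a = θ a` and, symmetrically, `θ a⁻¹` is the inverse of `θ a`. Hence, when
`a * (n * n⁻¹) = a`, the inequality `θ a = θ (a * n * n⁻¹) ≤ θ (a * n) * (θ n)⁻¹`, multiplied on the
right by `θ n`, gives `θ a * θ n ≤ θ (a * n)`, the reverse of the premorphism inequality. For
`a = β m` the condition reads `β m * β 1 = β m`, which holds because `β m ≤ β m * β 1 ≤ β m`:
right multiplication by the idempotent `β 1 = n * n⁻¹` can only move an element down.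
-/

section

variable {M : Type*} [InverseMonoid M]

namespace InverseMonoid

theorem mul_inv_mul_mul (a : M) : a * (a⁻¹ * a) = a := by
  rw [← mul_assoc, mul_inv_mul]

protected theorem inv_inv (a : M) : a⁻¹⁻¹ = a :=
  (inv_unique a⁻¹ a (inv_mul_inv a) (mul_inv_mul a)).symm

theorem isIdempotentElem_mul_inv (a : M) : IsIdempotentElem (a * a⁻¹) := by
  rw [IsIdempotentElem, ← mul_assoc, mul_inv_mul]

theorem isIdempotentElem_inv_mul (a : M) : IsIdempotentElem (a⁻¹ * a) := by
  rw [IsIdempotentElem, ← mul_assoc, inv_mul_inv]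

theorem inv_eq_self_of_isIdempotentElem {e : M} (he : IsIdempotentElem e) : e⁻¹ = e :=
  (inv_unique e e (by rw [he, he]) (by rw [he, he])).symm

theorem isIdempotentElem_mul {e f : M} (he : IsIdempotentElem e) (hf : IsIdempotentElem f) :
    IsIdempotentElem (e * f) := by
  set x := (e * f)⁻¹
  have hx : x * (e * f) * x = x := inv_mul_inv (e * f)
  -- `f * x * e` is an inverse of `e * f`, hence equal to `x`; this makes `x` idempotent.
  have hfxe : f * x * e = x := by
    apply inv_unique
    · calc e * f * (f * x * e) * (e * f) = e * (f * f) * x * ((e * e) * f) := by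
            simp only [mul_assoc]
        _ = e * f * x * (e * f) := by rw [he, hf, mul_assoc e f]
        _ = e * f := mul_inv_mul (e * f)
    · calc f * x * e * (e * f) * (f * x * e) = f * (x * ((e * e) * (f * f)) * x) * e := by
            simp only [mul_assoc]
        _ = f * x * e := by rw [he, hf, hx]
  have hxx : IsIdempotentElem x := by
    calc x * x = f * x * e * (f * x * e) := by rw [hfxe]
      _ = f * (x * (e * f) * x) * e := by simp only [mul_assoc]
      _ = x := by rw [hx, hfxe]
  have hef : e * f = x := by
    rw [← InverseMonoid.inv_inv (e * f), inv_eq_self_of_isIdempotentElem hxx]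
  rwa [hef]

theorem commute_of_isIdempotentElem {e f : M} (he : IsIdempotentElem e)
    (hf : IsIdempotentElem f) : Commute e f := by
  have hef := isIdempotentElem_mul he hf
  have hfe := isIdempotentElem_mul hf he
  have hinv : f * e = (e * f)⁻¹ := by
    apply inv_unique
    · calc e * f * (f * e) * (e * f) = e * (f * f) * (e * e) * f := by simp only [mul_assoc]
        _ = e * f * (e * f) := by rw [hf, he]; simp only [mul_assoc]
        _ = e * f := hef
    · calc f * e * (e * f) * (f * e) = f * (e * e) * (f * f) * e := by simp only [mul_assoc]
        _ = f * e * (f * e) := by rw [hf, he]; simp only [mul_assoc]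
        _ = f * e := hfe
  rw [Commute, SemiconjBy, hinv, inv_eq_self_of_isIdempotentElem hef]

protected theorem mul_inv_rev (a b : M) : (a * b)⁻¹ = b⁻¹ * a⁻¹ := by
  have hcomm := (commute_of_isIdempotentElem (isIdempotentElem_mul_inv b)
    (isIdempotentElem_inv_mul a)).eq
  symm
  apply inv_unique
  · calc a * b * (b⁻¹ * a⁻¹) * (a * b) = a * ((b * b⁻¹) * (a⁻¹ * a)) * b := by
          simp only [mul_assoc]
      _ = (a * a⁻¹ * a) * (b * b⁻¹ * b) := by rw [hcomm]; simp only [mul_assoc]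
      _ = a * b := by rw [mul_inv_mul, mul_inv_mul]
  · calc b⁻¹ * a⁻¹ * (a * b) * (b⁻¹ * a⁻¹) = b⁻¹ * ((a⁻¹ * a) * (b * b⁻¹)) * a⁻¹ := by
          simp only [mul_assoc]
      _ = (b⁻¹ * b * b⁻¹) * (a⁻¹ * a * a⁻¹) := by rw [← hcomm]; simp only [mul_assoc]
      _ = b⁻¹ * a⁻¹ := by rw [inv_mul_inv, inv_mul_inv]

theorem mul_eq_conj_mul {e : M} (he : IsIdempotentElem e) (c : M) :
    c * e = c * e * c⁻¹ * c := by
  calc c * e = c * (c⁻¹ * c) * e := by rw [mul_inv_mul_mul]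
    _ = c * (e * (c⁻¹ * c)) := by
        rw [mul_assoc, (commute_of_isIdempotentElem (isIdempotentElem_inv_mul c) he).eq]
    _ = c * e * c⁻¹ * c := by simp only [mul_assoc]

theorem isIdempotentElem_conj {e : M} (he : IsIdempotentElem e) (c : M) :
    IsIdempotentElem (c * e * c⁻¹) := by
  calc c * e * c⁻¹ * (c * e * c⁻¹) = c * e * c⁻¹ * c * e * c⁻¹ := by simp only [mul_assoc]
    _ = c * e * c⁻¹ := by rw [← mul_eq_conj_mul he, mul_assoc c e e, he]

end InverseMonoid

open InverseMonoid

theorem npo_trans {a b c : M} (hab : npo a b) (hbc : npo b c) : npo a c := by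
  obtain ⟨e, he, rfl⟩ := hab
  obtain ⟨f, hf, rfl⟩ := hbc
  exact ⟨e * f, isIdempotentElem_mul he hf, (mul_assoc e f c).symm⟩

theorem npo_antisymm {a b : M} (hab : npo a b) (hba : npo b a) : a = b := by
  obtain ⟨e, he, hae⟩ := hab
  obtain ⟨f, hf, hbf⟩ := hba
  have hefa : a = e * (f * a) := by rw [← hbf, ← hae]
  have hfa : f * a = a := by
    calc f * a = f * e * (f * a) := by rw [mul_assoc, ← hefa]
      _ = e * ((f * f) * a) := by
          rw [(commute_of_isIdempotentElem hf he).eq]; simp only [mul_assoc]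
      _ = a := by rw [hf, ← hefa]
  rw [hbf, hfa]

theorem npo_mul_right {a b : M} (hab : npo a b) (c : M) : npo (a * c) (b * c) := by
  obtain ⟨e, he, rfl⟩ := hab
  exact ⟨e, he, mul_assoc e b c⟩

theorem npo_mul_left {a b : M} (hab : npo a b) (c : M) : npo (c * a) (c * b) := by
  obtain ⟨e, he, rfl⟩ := hab
  refine ⟨c * e * c⁻¹, isIdempotentElem_conj he c, ?_⟩
  calc c * (e * b) = c * e * b := (mul_assoc c e b).symm
    _ = c * e * c⁻¹ * c * b := congrArg (· * b) (mul_eq_conj_mul he c)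
    _ = c * e * c⁻¹ * (c * b) := mul_assoc _ c b

theorem npo_mul_of_isIdempotentElem {e : M} (he : IsIdempotentElem e) (a : M) :
    npo (a * e) a := by
  simpa only [mul_one] using npo_mul_left (⟨e, he, (mul_one e).symm⟩ : npo e 1) a

theorem mul_inv_mul_of_npo {a b : M} (hab : npo a b) : b * (a⁻¹ * a) = a := by
  obtain ⟨e, he, rfl⟩ := hab
  rw [InverseMonoid.mul_inv_rev, inv_eq_self_of_isIdempotentElem he]
  calc b * (b⁻¹ * e * (e * b)) = b * b⁻¹ * (e * e) * b := by simp only [mul_assoc]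
    _ = e * b := by
        rw [he, (commute_of_isIdempotentElem (isIdempotentElem_mul_inv b) he).eq, mul_assoc e,
          mul_inv_mul]

namespace IsPremorphism

variable {θ : M → M}

theorem map_mul_map_inv_mul (hθ : IsPremorphism θ) (a : M) : θ a * θ a⁻¹ * θ a = θ a := by
  have hle : npo (θ a) (θ a * θ a⁻¹ * θ a) := by
    have h := npo_trans (hθ a (a⁻¹ * a)) (npo_mul_left (hθ a⁻¹ a) (θ a))
    rwa [mul_inv_mul_mul, ← mul_assoc] at h
  calc θ a * θ a⁻¹ * θ a = θ a * θ a⁻¹ * θ a * ((θ a)⁻¹ * θ a) := by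
        rw [mul_assoc _ (θ a), mul_inv_mul_mul]
    _ = θ a := mul_inv_mul_of_npo hle

theorem map_inv (hθ : IsPremorphism θ) (a : M) : θ a⁻¹ = (θ a)⁻¹ := by
  have h := hθ.map_mul_map_inv_mul a⁻¹
  rw [InverseMonoid.inv_inv] at h
  exact inv_unique _ _ (hθ.map_mul_map_inv_mul a) h

theorem map_mul_of_mul_mul_inv (hθ : IsPremorphism θ) {a n : M} (h : a * (n * n⁻¹) = a) :
    θ (a * n) = θ a * θ n := by
  have hθa : npo (θ a) (θ (a * n) * (θ n)⁻¹) := by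
    have h' := hθ (a * n) n⁻¹
    rwa [mul_assoc, h, hθ.map_inv] at h'
  have hge : npo (θ a * θ n) (θ (a * n)) := by
    have h' := npo_mul_of_isIdempotentElem (isIdempotentElem_inv_mul (θ n)) (θ (a * n))
    rw [← mul_assoc] at h'
    exact npo_trans (npo_mul_right hθa (θ n)) h'
  exact npo_antisymm (hθ a n) hge

theorem mul_map_one (hθ : IsPremorphism θ) (h1 : IsIdempotentElem (θ 1)) (a : M) :
    θ a * θ 1 = θ a :=
  (npo_antisymm (by simpa only [mul_one] using hθ a 1) (npo_mul_of_isIdempotentElem h1 (θ a))).symm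

end IsPremorphism

end

theorem holomorph_assoc_identity {M : Type*} [InverseMonoid M]
    (β γ : M → M) (hβ : IsPremorphism β) (hγ : IsPremorphism γ)
    (m n : M) (hn : n * n⁻¹ = β 1) :
    γ (β m * n) = γ (β m) * γ n := by
  have hβ1 : IsIdempotentElem (β 1) := hn ▸ InverseMonoid.isIdempotentElem_mul_inv n
  have hβm : β m * (n * n⁻¹) = β m := by rw [hn, hβ.mul_map_one hβ1]
  exact hγ.map_mul_of_mul_mul_inv hβm
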